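/- Let G be an infinite finitely generated group with generating family X. Then every closed ball of (𝒫(G), d_𝒫) of radius r = 2^{−n} with n ∈ ℕ has diameter exactly r. -/

import Mathlib

open Filter Set
open scoped ENNReal NNReal

namespace MarkedSpace

noncomputable section

variable {E : Type*}

/-- `coverNum d s ε` : the minimal cardinality of a cover of the (sub)space `s`
by closed balls of radius `ε` (centered in `s`), for the distance function `d`. -/
def coverNum (d : E → E → ℝ) (s : Set E) (ε : ℝ) : ℕ :=
  sInf {n : ℕ | ∃ t : Finset E, t.card = n ∧ ↑t ⊆ s ∧ s ⊆ ⋃ x ∈ t, {y | d x y ≤ ε}}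

/-- `packNum d s ε` : the maximal number of pairwise disjoint closed balls
of radius `ε` in the (sub)space `s`. -/
def packNum (d : E → E → ℝ) (s : Set E) (ε : ℝ) : ℕ :=
  sSup {n : ℕ | ∃ t : Finset E, t.card = n ∧ ↑t ⊆ s ∧
    (↑t : Set E).Pairwise fun x y =>
      Disjoint {z | z ∈ s ∧ d x z ≤ ε} {z | z ∈ s ∧ d y z ≤ ε}}

/-- Lower Minkowski dimension of the (sub)space `s`:
`liminf_{ε → 0⁺} log N(s,ε) / log (1/ε)`. -/
def mdimLower (d : E → E → ℝ) (s : Set E) : ℝ≥0∞ :=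
  liminf (fun ε : ℝ => ENNReal.ofReal (Real.log (coverNum d s ε : ℝ) / Real.log (1 / ε)))
    (nhdsWithin 0 (Set.Ioi 0))

/-- Upper Minkowski dimension of the (sub)space `s`:
`limsup_{ε → 0⁺} log N(s,ε) / log (1/ε)`. -/
def mdimUpper (d : E → E → ℝ) (s : Set E) : ℝ≥0∞ :=
  limsup (fun ε : ℝ => ENNReal.ofReal (Real.log (coverNum d s ε : ℝ) / Real.log (1 / ε)))
    (nhdsWithin 0 (Set.Ioi 0))

/-- The valuation `ν(A,B) = sup {n | A ∩ B(n) = B ∩ B(n)}` associated to a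
family of balls `ball : ℕ → Set E`. -/
def nuB (ball : ℕ → Set E) (A B : Set E) : ℕ∞ :=
  ⨆ (n : ℕ) (_ : A ∩ ball n = B ∩ ball n), (n : ℕ∞)

/-- The ultrametric distance `d(A,B) = 2^{-ν(A,B)}` (with `2^{-∞} = 0`, and with the
convention that the distance is `2` when `A` and `B` do not even agree on the ball of
radius `0`). -/
def distB (ball : ℕ → Set E) (A B : Set E) : ℝ :=
  haveI : Decidable (A ∩ ball 0 = B ∩ ball 0) := Classical.propDecidable _
  if A ∩ ball 0 = B ∩ ball 0 then
    (if nuB ball A B = ⊤ then 0 else (2⁻¹ : ℝ) ^ (nuB ball A B).toNat)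
  else 2

end

end MarkedSpace

namespace MarkedSpace

/-- `wordBall X n` : the ball `B_X(n)` of radius `n` in a group `G` with respect to a
generating family `X`, i.e. the set of elements that are products of at most `n`
elements of `X ∪ X⁻¹`. -/
def wordBall {G : Type*} [Group G] (X : Set G) (n : ℕ) : Set G :=
  {g | ∃ l : List G, l.length ≤ n ∧ (∀ x ∈ l, x ∈ X ∨ x⁻¹ ∈ X) ∧ l.prod = g}

end MarkedSpace

namespace MarkedSpace

/-- Diameter of a subset for a distance function `d`. -/
noncomputable def rdiam {E : Type*} (d : E → E → ℝ) (A : Set E) : ℝ :=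
  sSup {r : ℝ | ∃ x ∈ A, ∃ y ∈ A, r = d x y}

end MarkedSpace

open MarkedSpace

namespace MarkedSpace
section
variable {E : Type*} {ball : ℕ → Set E}

lemma restrict (hmono : Monotone ball) {A B : Set E} {k m : ℕ} (hk : k ≤ m) (h : A ∩ ball m = B ∩ ball m) :
    A ∩ ball k = B ∩ ball k := by
  have : ball k ⊆ ball m := hmono hk
  rw [show A ∩ ball k = (A ∩ ball m) ∩ ball k by rw [inter_assoc, inter_eq_self_of_subset_right this],
    h, inter_assoc, inter_eq_self_of_subset_right this]

lemma distB_le_of_agree (hmono : Monotone ball) {A B : Set E} {n : ℕ} (h : A ∩ ball n = B ∩ ball n) :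
    distB ball A B ≤ (2⁻¹ : ℝ) ^ n := by
  have h0 : A ∩ ball 0 = B ∩ ball 0 := restrict hmono (Nat.zero_le n) h
  rw [distB]
  rw [if_pos h0]
  split_ifs with htop
  · positivity
  · have hge : (n : ℕ∞) ≤ nuB ball A B := le_iSup₂ (f := fun m (_ : A ∩ ball m = B ∩ ball m) => (m : ℕ∞)) n h
    have : n ≤ (nuB ball A B).toNat := by
      rcases (WithTop.ne_top_iff_exists.mp htop) with ⟨m, hm⟩
      simp [← hm] at hge ⊢
      show n ≤ ENat.toNat (m : ℕ∞)
      rw [ENat.toNat_coe]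
      exact (Nat.cast_le (α := ℕ∞)).mp hge
    exact pow_le_pow_of_le_one (by norm_num) (by norm_num) this

lemma agree_of_distB_le (hmono : Monotone ball) {A B : Set E} {n : ℕ} (h : distB ball A B ≤ (2⁻¹ : ℝ) ^ n) :
    A ∩ ball n = B ∩ ball n := by
  rw [distB] at h
  have h0 : A ∩ ball 0 = B ∩ ball 0 := by
    by_contra h0
    rw [if_neg h0] at h
    have : (2⁻¹ : ℝ) ^ n ≤ 1 := pow_le_one₀ (by norm_num) (by norm_num)
    linarith
  rw [if_pos h0] at h
  by_contra hn
  have hn0 : n ≠ 0 := fun e => hn (e ▸ h0)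
  have hbound : nuB ball A B ≤ ((n - 1 : ℕ) : ℕ∞) := by
    refine iSup₂_le fun m hm => ?_
    have : m ≤ n - 1 := by
      by_contra hc
      have hnm : n ≤ m := by omega
      exact hn (restrict hmono hnm hm)
    exact_mod_cast this
  split_ifs at h with htop
  · rw [htop] at hbound
    exact absurd hbound (by simp)
  · have hle : (nuB ball A B).toNat ≤ n - 1 := by
      rcases (WithTop.ne_top_iff_exists.mp htop) with ⟨m, hm⟩
      rw [← hm] at hbound ⊢
      have : m ≤ n - 1 := Nat.cast_le.mp hbound
      show ENat.toNat (m : ℕ∞) ≤ n - 1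
      rw [ENat.toNat_coe]
      exact this
    have : (2⁻¹ : ℝ) ^ n < (2⁻¹ : ℝ) ^ (nuB ball A B).toNat :=
      pow_lt_pow_right_of_lt_one₀ (by norm_num) (by norm_num) (by omega)
    linarith

end
end MarkedSpace

namespace MarkedSpace
section
variable {G : Type*} [Group G] {X : Set G}

lemma wordBall_mono : Monotone (wordBall X) := fun _ _ h _ ⟨l, h1, h2, h3⟩ =>
  ⟨l, h1.trans h, h2, h3⟩

lemma one_mem_wordBall (n : ℕ) : (1 : G) ∈ wordBall X n := ⟨[], by simp⟩

lemma wordBall_finite (hXfin : X.Finite) : ∀ n, (wordBall X n).Finite := by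
  intro n
  induction n with
  | zero =>
    refine Set.Finite.subset (Set.finite_singleton 1) ?_
    rintro g ⟨l, h1, _, h3⟩
    interval_cases h : l.length
    · simp [List.length_eq_zero_iff.mp h] at h3; simp [← h3]
  | succ n ih =>
    refine Set.Finite.subset (((hXfin.union hXfin.inv).insert 1).mul ih) ?_
    rintro g ⟨l, h1, h2, h3⟩
    match l with
    | [] =>
      simp at h3
      exact ⟨1, Set.mem_insert _ _, 1, one_mem_wordBall n, by simp [← h3]⟩
    | a :: t =>
      refine ⟨a, ?_, t.prod, ⟨t, by simpa using h1, fun y hy => h2 y (by simp [hy]), rfl⟩, by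
        simp [← h3]⟩
      rcases h2 a (by simp) with h | h
      · exact Set.mem_insert_of_mem _ (Set.mem_union_left _ h)
      · exact Set.mem_insert_of_mem _ (Set.mem_union_right _ (Set.mem_inv.mpr h))

lemma wordBall_stable (hstab : wordBall X (n + 1) ⊆ wordBall X n) :
    ∀ m, wordBall X (n + m) ⊆ wordBall X n := by
  intro m
  induction m with
  | zero => exact fun g hg => hg
  | succ m ih =>
    rintro g ⟨l, h1, h2, h3⟩
    match l with
    | [] => simp at h3; exact h3 ▸ one_mem_wordBall n
    | a :: t =>
      have ht : t.prod ∈ wordBall X n :=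
        ih ⟨t, by simp at h1; omega, fun y hy => h2 y (by simp [hy]), rfl⟩
      obtain ⟨l', hl1, hl2, hl3⟩ := ht
      refine hstab ⟨a :: l', by simpa using hl1, ?_, by simp [hl3, ← h3]⟩
      intro y hy
      rcases List.mem_cons.mp hy with rfl | hy'
      · exact h2 y (by simp)
      · exact hl2 y hy'

lemma exists_new_elt [Infinite G] (hXfin : X.Finite) (hXgen : Subgroup.closure X = ⊤)
    (n : ℕ) : ∃ g, g ∈ wordBall X (n + 1) ∧ g ∉ wordBall X n := by
  by_contra h
  push_neg at h
  have hstab : wordBall X (n + 1) ⊆ wordBall X n := fun g hg => h g hg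
  have huniv : (Set.univ : Set G) ⊆ wordBall X n := by
    intro g _
    have hg : g ∈ Submonoid.closure (X ∪ X⁻¹) := by
      rw [← Subgroup.closure_toSubmonoid]
      exact hXgen ▸ Subgroup.mem_top g
    obtain ⟨l, hl1, hl2⟩ := Submonoid.exists_list_of_mem_closure hg
    have hlb : g ∈ wordBall X l.length := by
      refine ⟨l, le_rfl, fun y hy => ?_, hl2⟩
      rcases hl1 y hy with h | h
      · exact Or.inl h
      · exact Or.inr (Set.mem_inv.mp h)
    rcases le_or_gt l.length n with hle | hlt
    · exact wordBall_mono hle hlb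
    · exact wordBall_stable hstab (l.length - n)
        (wordBall_mono (by omega) hlb)
  exact Set.infinite_univ (Set.Finite.subset (wordBall_finite hXfin n) huniv)


end
end MarkedSpace

/-- For an infinite finitely generated group `G` with generating family `X`, every
closed ball of `(𝒫(G), d_𝒫)` of radius `r = 2^{−n}` (`n ∈ ℕ`) has diameter exactly
`r`. -/
theorem powerset_ball_diam {G : Type*} [Group G] [Infinite G] (X : Set G)
    (hXfin : X.Finite) (hXgen : Subgroup.closure X = ⊤) (x : Set G) (n : ℕ) :
    rdiam (distB (wordBall X))
      {y : Set G | distB (wordBall X) x y ≤ (2⁻¹ : ℝ) ^ n} = (2⁻¹ : ℝ) ^ n := by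
  have hmono : Monotone (wordBall X) := wordBall_mono
  obtain ⟨g, hg1, hg0⟩ := exists_new_elt hXfin hXgen n
  classical
  set z : Set G := if g ∈ x then x \ {g} else insert g x with hz
  have hzx : ∀ a, a ≠ g → (a ∈ z ↔ a ∈ x) := by
    intro a ha; rw [hz]; split_ifs with h <;> simp [ha]
  have hgz : g ∈ z ↔ g ∉ x := by rw [hz]; split_ifs with h <;> simp [h]
  have hzn : x ∩ wordBall X n = z ∩ wordBall X n := by
    ext a
    by_cases hag : a = g
    · subst hag; simp [hg0]
    · simp only [Set.mem_inter_iff, hzx a hag]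
  have hdis : x ∩ wordBall X (n + 1) ≠ z ∩ wordBall X (n + 1) := by
    intro he
    have : g ∈ x ∩ wordBall X (n + 1) ↔ g ∈ z ∩ wordBall X (n + 1) := by rw [he]
    simp only [Set.mem_inter_iff, hg1, and_true, hgz] at this
    tauto
  have hnu : nuB (wordBall X) x z = (n : ℕ∞) := by
    refine le_antisymm (iSup₂_le fun m hm => ?_)
      (le_iSup₂ (f := fun m (_ : x ∩ wordBall X m = z ∩ wordBall X m) => (m : ℕ∞)) n hzn)
    have : m ≤ n := by
      by_contra hc
      exact hdis (restrict hmono (by omega) hm)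
    exact_mod_cast this
  have hdxz : distB (wordBall X) x z = (2⁻¹ : ℝ) ^ n := by
    rw [distB, if_pos (restrict hmono (Nat.zero_le n) hzn), hnu,
      if_neg (by simp : (n : ℕ∞) ≠ ⊤)]
    simp
  have hxmem : x ∈ {y : Set G | distB (wordBall X) x y ≤ (2⁻¹ : ℝ) ^ n} :=
    distB_le_of_agree hmono rfl
  have hzmem : z ∈ {y : Set G | distB (wordBall X) x y ≤ (2⁻¹ : ℝ) ^ n} := hdxz.le
  have hub : ∀ r ∈ {r : ℝ | ∃ y ∈ {y : Set G | distB (wordBall X) x y ≤ (2⁻¹ : ℝ) ^ n},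
      ∃ w ∈ {y : Set G | distB (wordBall X) x y ≤ (2⁻¹ : ℝ) ^ n}, r = distB (wordBall X) y w},
      r ≤ (2⁻¹ : ℝ) ^ n := by
    rintro r ⟨y, hy, w, hw, rfl⟩
    exact distB_le_of_agree hmono
      ((agree_of_distB_le hmono hy).symm.trans (agree_of_distB_le hmono hw))
  have hmem : (2⁻¹ : ℝ) ^ n ∈ {r : ℝ | ∃ y ∈ {y : Set G | distB (wordBall X) x y ≤ (2⁻¹ : ℝ) ^ n},
      ∃ w ∈ {y : Set G | distB (wordBall X) x y ≤ (2⁻¹ : ℝ) ^ n}, r = distB (wordBall X) y w} :=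
    ⟨x, hxmem, z, hzmem, hdxz.symm⟩
  exact le_antisymm (Real.sSup_le hub (by positivity)) (le_csSup ⟨_, hub⟩ hmem)
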